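/- Let X₁,…,X_N be jointly distributed random variables and let Q be another random variable, all with finite ranges, and let 1 ≤ T ≤ N. Then the average of the conditional joint entropies H(X_𝒯 | Q) over all subsets 𝒯 ⊆ {1,…,N} of size T is at least (T/N)·H(X₁,…,X_N | Q). -/

import Mathlib

open scoped BigOperators

/-- Shannon entropy (in nats) of a finite-range random variable `X` under `μ`. -/
noncomputable def Hent {Ω α : Type*} [Fintype α] (μ : PMF Ω) (X : Ω → α) : ℝ :=
  ∑ a : α, Real.negMulLog (((μ.map X) a).toReal)

/-- Conditional entropy `H(X | Y)`. -/
noncomputable def Hcond {Ω α β : Type*} [Fintype α] [Fintype β] (μ : PMF Ω)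
    (X : Ω → α) (Y : Ω → β) : ℝ :=
  Hent μ (fun ω => (X ω, Y ω)) - Hent μ Y

/-!
Joint entropy of sub-families is submodular: `H(A,B,C) + H(C) ≤ H(A,C) + H(B,C)` is Gibbs'
inequality for the law `p(a,b,c)` against the weights `p(a,c) p(b,c) / p(c)`, which have the same
total mass. For a submodular set function `f` with `f ∅ ≥ 0`, induction on `S` gives
`(|S| - 1) f S ≤ ∑_{i ∈ S} f (S \ {i})`; summing over `|S| = k + 1` and double counting yields
`k B_{k+1} ≤ (N - k) B_k` for `B_k = ∑_{|S| = k} f S`. As `(k + 1) C(N, k+1) = (N - k) C(N, k)`,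
the averages `B_k / (k C(N, k))` decrease in `k`, and comparing `k = T` with `k = N` is Han's
inequality for `f S = H(X_S | Q)`.
-/

open Finset Function Real

theorem sum_mul_log_le_sum_mul_log {ι : Type*} (s : Finset ι) {p q : ι → ℝ}
    (hp : ∀ i ∈ s, 0 ≤ p i) (hq : ∀ i ∈ s, 0 ≤ q i)
    (hpq : ∀ i ∈ s, 0 < p i → 0 < q i)
    (hsum : ∑ i ∈ s, q i ≤ ∑ i ∈ s, p i) :
    ∑ i ∈ s, p i * log (q i) ≤ ∑ i ∈ s, p i * log (p i) := by
  have hterm : ∀ i ∈ s, p i * log (q i) - p i * log (p i) ≤ q i - p i := by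
    intro i hi
    obtain hp0 | hp0 := (hp i hi).eq_or_lt
    · simp [← hp0, hq i hi]
    · have hq0 := hpq i hi hp0
      have hlog := log_le_sub_one_of_pos (div_pos hq0 hp0)
      rw [log_div hq0.ne' hp0.ne'] at hlog
      calc p i * log (q i) - p i * log (p i) = p i * (log (q i) - log (p i)) := by ring
        _ ≤ p i * (q i / p i - 1) := mul_le_mul_of_nonneg_left hlog hp0.le
        _ = q i - p i := by field_simp
  have := sum_le_sum hterm
  rw [sum_sub_distrib, sum_sub_distrib] at this
  linarith

namespace PMF

variable {γ δ : Type*} [Fintype γ]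

theorem toReal_map_apply [DecidableEq δ] (ν : PMF γ) (g : γ → δ) (b : δ) :
    (ν.map g b).toReal = ∑ a with g a = b, (ν a).toReal := by
  rw [map_apply, tsum_fintype, ENNReal.toReal_sum fun a _ => by split <;> simp [ν.apply_ne_top],
    sum_filter]
  refine sum_congr rfl fun a _ => ?_
  split_ifs <;> simp_all [eq_comm]

theorem toReal_apply_le_toReal_map_apply (ν : PMF γ) (g : γ → δ) (a : γ) :
    (ν a).toReal ≤ (ν.map g (g a)).toReal := by
  classical
  rw [toReal_map_apply]
  exact single_le_sum (fun _ _ => ENNReal.toReal_nonneg) (by simp)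

theorem sum_toReal_map [Fintype δ] (ν : PMF γ) (g : γ → δ) :
    ∑ b, (ν.map g b).toReal = ∑ a, (ν a).toReal := by
  classical
  simp only [toReal_map_apply]
  exact sum_fiberwise univ g _

theorem toReal_map_snd_apply [Fintype δ] (κ : PMF (γ × δ)) (z : δ) :
    (κ.map Prod.snd z).toReal = ∑ x, (κ (x, z)).toReal := by
  classical
  rw [toReal_map_apply, sum_filter, Fintype.sum_prod_type]
  simp

end PMF

section Entropy

variable {Ω γ δ ε : Type*}

theorem Hent_comp_eq_Hent_map [Fintype δ] (μ : PMF Ω) (W : Ω → γ) (g : γ → δ) :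
    Hent μ (fun ω => g (W ω)) = Hent (μ.map W) g := by
  simp only [Hent, PMF.map_comp]
  rfl

theorem Hent_eq_neg_sum_mul_log [Fintype γ] [Fintype δ] (ν : PMF γ) (g : γ → δ) :
    Hent ν g = -∑ a, (ν a).toReal * log ((ν.map g (g a)).toReal) := by
  classical
  rw [Hent, ← sum_fiberwise univ g, ← sum_neg_distrib]
  refine sum_congr rfl fun b _ => ?_
  calc negMulLog (ν.map g b).toReal
      = -(∑ a with g a = b, (ν a).toReal) * log (ν.map g b).toReal := by
        rw [negMulLog, PMF.toReal_map_apply]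
    _ = -∑ a with g a = b, (ν a).toReal * log (ν.map g (g a)).toReal := by
        rw [neg_mul, sum_mul]
        congr 1
        exact sum_congr rfl fun a ha => by rw [(mem_filter.mp ha).2]

theorem Hent_comp_of_injective [Fintype γ] [Fintype δ] (μ : PMF Ω) (W : Ω → γ) {e : γ → δ}
    (he : Injective e) :
    Hent μ (fun ω => e (W ω)) = Hent μ W := by
  classical
  rw [Hent_comp_eq_Hent_map, Hent, Hent]
  symm
  refine Fintype.sum_of_injective e he _ _ (fun b hb => ?_) fun a => ?_
  · rw [PMF.toReal_map_apply (μ.map W) e,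
      sum_eq_zero fun a ha => absurd ⟨a, (mem_filter.mp ha).2⟩ hb,
      negMulLog_zero]
  · rw [PMF.toReal_map_apply (μ.map W) e, filter_congr fun a' _ => he.eq_iff, filter_eq' univ a,
      if_pos (mem_univ a), sum_singleton]

theorem sum_mul_div_eq_sum_of_sum_eq [Fintype γ] [Fintype δ] [Fintype ε]
    {a : γ × ε → ℝ} {b : δ × ε → ℝ} {c : ε → ℝ}
    (ha : ∀ z, ∑ x, a (x, z) = c z) (hb : ∀ z, ∑ y, b (y, z) = c z) :
    ∑ w : γ × δ × ε, a (w.1, w.2.2) * b w.2 / c w.2.2 = ∑ z, c z :=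
  calc ∑ w : γ × δ × ε, a (w.1, w.2.2) * b w.2 / c w.2.2
      = ∑ z, (∑ x, a (x, z)) * (∑ y, b (y, z)) / c z := by
        rw [Fintype.sum_prod_type, sum_comm]
        simp only [Fintype.sum_prod_type_right, sum_mul_sum, sum_div]
        exact sum_congr rfl fun z _ => sum_comm
    _ = ∑ z, c z := by simp only [ha, hb, mul_self_div_self]

theorem PMF.Hent_submodular [Fintype γ] [Fintype δ] [Fintype ε] (ν : PMF (γ × δ × ε)) :
    Hent ν id + Hent ν (fun w => w.2.2) ≤
      Hent ν (fun w => (w.1, w.2.2)) + Hent ν Prod.snd := by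
  set p : γ × δ × ε → ℝ := fun w => (ν w).toReal
  set m₁₃ : γ × ε → ℝ := fun u => (ν.map (fun w => (w.1, w.2.2)) u).toReal
  set m₂₃ : δ × ε → ℝ := fun u => (ν.map Prod.snd u).toReal
  set m₃ : ε → ℝ := fun z => (ν.map (fun w => w.2.2) z).toReal
  set q : γ × δ × ε → ℝ := fun w => m₁₃ (w.1, w.2.2) * m₂₃ w.2 / m₃ w.2.2
  have hp : ∀ w, 0 ≤ p w := fun w => ENNReal.toReal_nonneg
  have hm₁₃ : ∀ z, ∑ x, m₁₃ (x, z) = m₃ z := fun z => by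
    simp only [m₁₃, m₃, ← PMF.toReal_map_snd_apply, PMF.map_comp]
    rfl
  have hm₂₃ : ∀ z, ∑ y, m₂₃ (y, z) = m₃ z := fun z => by
    simp only [m₂₃, m₃, ← PMF.toReal_map_snd_apply, PMF.map_comp]
    rfl
  have hq_sum : ∑ w, q w = ∑ w, p w := by
    rw [sum_mul_div_eq_sum_of_sum_eq hm₁₃ hm₂₃]
    exact PMF.sum_toReal_map ν _
  have hm_pos : ∀ w, 0 < p w → 0 < m₁₃ (w.1, w.2.2) ∧ 0 < m₂₃ w.2 ∧ 0 < m₃ w.2.2 :=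
    fun w hw => ⟨hw.trans_le (ν.toReal_apply_le_toReal_map_apply (fun v => (v.1, v.2.2)) w),
      hw.trans_le (ν.toReal_apply_le_toReal_map_apply Prod.snd w),
      hw.trans_le (ν.toReal_apply_le_toReal_map_apply (fun v => v.2.2) w)⟩
  have hq_pos : ∀ w, 0 < p w → 0 < q w := fun w hw =>
    have ⟨h₁₃, h₂₃, h₃⟩ := hm_pos w hw
    div_pos (mul_pos h₁₃ h₂₃) h₃
  have hlog_q : ∑ w, p w * log (q w) = ∑ w, p w * log (m₁₃ (w.1, w.2.2)) +
      ∑ w, p w * log (m₂₃ w.2) - ∑ w, p w * log (m₃ w.2.2) := by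
    rw [← sum_add_distrib, ← sum_sub_distrib]
    refine sum_congr rfl fun w _ => ?_
    obtain hw | hw := (hp w).eq_or_lt
    · rw [← hw]; ring
    · obtain ⟨h₁₃, h₂₃, h₃⟩ := hm_pos w hw
      rw [log_div (mul_pos h₁₃ h₂₃).ne' h₃.ne', log_mul h₁₃.ne' h₂₃.ne']
      ring
  have gibbs := sum_mul_log_le_sum_mul_log univ (fun w _ => hp w)
    (fun w _ => div_nonneg (mul_nonneg ENNReal.toReal_nonneg ENNReal.toReal_nonneg)
      ENNReal.toReal_nonneg) (fun w _ => hq_pos w) hq_sum.le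
  simp only [Hent_eq_neg_sum_mul_log, PMF.map_id, id]
  linarith

theorem Hent_submodular [Fintype γ] [Fintype δ] [Fintype ε] (μ : PMF Ω) (A : Ω → γ) (B : Ω → δ)
    (C : Ω → ε) :
    Hent μ (fun ω => (A ω, B ω, C ω)) + Hent μ C ≤
      Hent μ (fun ω => (A ω, C ω)) + Hent μ (fun ω => (B ω, C ω)) := by
  have := (μ.map fun ω => (A ω, B ω, C ω)).Hent_submodular
  simp only [← Hent_comp_eq_Hent_map] at this
  exact this

end Entropy

section Submodular

variable {ι : Type*} [DecidableEq ι] {f : Finset ι → ℝ}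

def IsSubmodular (f : Finset ι → ℝ) : Prop :=
  ∀ ⦃S : Finset ι⦄ ⦃a b : ι⦄, a ∉ S → b ∉ S → a ≠ b →
    f (insert a (insert b S)) + f S ≤ f (insert a S) + f (insert b S)

theorem IsSubmodular.card_sub_one_mul_add_le_sum_erase (hf : IsSubmodular f) (S : Finset ι) :
    ((#S : ℝ) - 1) * f S + f ∅ ≤ ∑ i ∈ S, f (S.erase i) := by
  induction S using Finset.induction_on with
  | empty => simp
  | insert a S ha ih =>
    have hstep :
        ∀ i ∈ S, f (insert a S) + f (S.erase i) ≤ f (insert a (S.erase i)) + f S := by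
      intro i hi
      have := hf (fun h => ha (mem_of_mem_erase h)) (notMem_erase i S)
        (ne_of_mem_of_not_mem hi ha).symm
      rwa [insert_erase hi] at this
    have hsum := sum_le_sum hstep
    simp only [sum_add_distrib, sum_const, nsmul_eq_mul] at hsum
    rw [card_insert_of_notMem ha, sum_insert ha, erase_insert ha,
      sum_congr rfl fun i hi => by rw [erase_insert_of_ne (ne_of_mem_of_not_mem hi ha).symm]]
    push_cast
    linarith

theorem sum_powersetCard_succ_sum_erase [Fintype ι] (f : Finset ι → ℝ) (k : ℕ) :
    ∑ S ∈ powersetCard (k + 1) univ, ∑ i ∈ S, f (S.erase i) =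
      (Fintype.card ι - k : ℝ) * ∑ S ∈ powersetCard k univ, f S := by
  have hcompl :
      ∀ S ∈ powersetCard k univ, (Fintype.card ι - k : ℝ) * f S = ∑ _i ∈ Sᶜ, f S := by
    intro S hS
    rw [sum_const, card_compl, nsmul_eq_mul, (mem_powersetCard.mp hS).2,
      Nat.cast_sub ((mem_powersetCard.mp hS).2 ▸ card_le_univ S)]
  rw [mul_sum, sum_congr rfl hcompl, sum_sigma', sum_sigma']
  refine sum_nbij' (fun p => ⟨p.1.erase p.2, p.2⟩) (fun p => ⟨insert p.2 p.1, p.2⟩)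
    ?_ ?_ ?_ ?_ ?_
  · rintro ⟨S, i⟩ h
    simp only [mem_sigma, mem_powersetCard, subset_univ, true_and, mem_compl] at h ⊢
    exact ⟨by rw [card_erase_of_mem h.2, h.1, Nat.add_sub_cancel], notMem_erase i S⟩
  · rintro ⟨S, i⟩ h
    simp only [mem_sigma, mem_powersetCard, subset_univ, true_and, mem_compl] at h ⊢
    exact ⟨by rw [card_insert_of_notMem h.2, h.1], mem_insert_self i S⟩
  · rintro ⟨S, i⟩ h
    rw [insert_erase (mem_sigma.mp h).2]
  · rintro ⟨S, i⟩ h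
    rw [erase_insert (mem_compl.mp (mem_sigma.mp h).2)]
  · exact fun _ _ => rfl

theorem IsSubmodular.mul_sum_powersetCard_succ_le [Fintype ι] (hf : IsSubmodular f)
    (hf₀ : 0 ≤ f ∅) (k : ℕ) : (k : ℝ) * ∑ S ∈ powersetCard (k + 1) univ, f S ≤
      (Fintype.card ι - k : ℝ) * ∑ S ∈ powersetCard k univ, f S := by
  rw [← sum_powersetCard_succ_sum_erase, mul_sum]
  refine sum_le_sum fun S hS => ?_
  have := hf.card_sub_one_mul_add_le_sum_erase S
  rw [(mem_powersetCard.mp hS).2] at this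
  push_cast at this
  linarith

theorem IsSubmodular.mul_choose_mul_le_mul_sum_powersetCard [Fintype ι] (hf : IsSubmodular f)
    (hf₀ : 0 ≤ f ∅) {T : ℕ} (hT : T ≤ Fintype.card ι) :
    (T : ℝ) * (Fintype.card ι).choose T * f univ ≤
      Fintype.card ι * ∑ S ∈ powersetCard T univ, f S := by
  induction hT using Nat.decreasingInduction with
  | self =>
    rw [← card_univ, powersetCard_self, sum_singleton, Nat.choose_self, Nat.cast_one, mul_one]
  | of_succ k hk ih =>
    set N := Fintype.card ι
    have hchoose : ((k + 1 : ℕ) : ℝ) * N.choose (k + 1) = (N - k : ℝ) * N.choose k := by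
      rw [← Nat.cast_sub hk.le, ← Nat.cast_mul, ← Nat.cast_mul, mul_comm,
        Nat.choose_succ_right_eq, mul_comm]
    have hNk : (0 : ℝ) < N - k := sub_pos.mpr (by exact_mod_cast hk)
    refine le_of_mul_le_mul_left ?_ hNk
    calc (N - k : ℝ) * (k * N.choose k * f univ)
        = k * (((k + 1 : ℕ) : ℝ) * N.choose (k + 1) * f univ) := by rw [hchoose]; ring
      _ ≤ k * (N * ∑ S ∈ powersetCard (k + 1) univ, f S) :=
          mul_le_mul_of_nonneg_left ih k.cast_nonneg
      _ = N * (k * ∑ S ∈ powersetCard (k + 1) univ, f S) := by ring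
      _ ≤ N * ((N - k) * ∑ S ∈ powersetCard k univ, f S) :=
          mul_le_mul_of_nonneg_left (hf.mul_sum_powersetCard_succ_le hf₀ k) N.cast_nonneg
      _ = (N - k) * (N * ∑ S ∈ powersetCard k univ, f S) := by ring

end Submodular

section Subfamily

variable {Ω β ι : Type*} [DecidableEq ι] {α : ι → Type*}

theorem injective_split_insert (a : ι) (S : Finset ι) :
    Injective fun tc : (∀ i : (insert a S : Finset ι), α i) × β =>
      (tc.1 ⟨a, mem_insert_self a S⟩, restrict₂ (subset_insert a S) tc.1, tc.2) := by
  rintro ⟨t, c⟩ ⟨t', c'⟩ h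
  simp only [Prod.mk.injEq] at h
  obtain ⟨ha, hS, rfl⟩ := h
  refine Prod.ext (funext fun ⟨i, hi⟩ => ?_) rfl
  obtain rfl | hi := mem_insert.mp hi
  · exact ha
  · exact congrFun hS ⟨i, hi⟩

variable [∀ i, Fintype (α i)] [Fintype β]

theorem isSubmodular_Hcond_subfamily (μ : PMF Ω) (X : ∀ i, Ω → α i) (Q : Ω → β) :
    IsSubmodular fun S : Finset ι => Hcond μ (fun ω => fun i : S => X i ω) Q := by
  intro S a b _ _ _
  have habS : Hent μ (fun ω => ((fun i : (insert a (insert b S) : Finset ι) => X i ω), Q ω)) =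
      Hent μ (fun ω => (X a ω, (fun i : (insert b S : Finset ι) => X i ω), Q ω)) :=
    (Hent_comp_of_injective μ _ (injective_split_insert a (insert b S))).symm
  have habS' : Hent μ (fun ω => (X a ω, (fun i : (insert b S : Finset ι) => X i ω), Q ω)) =
      Hent μ (fun ω => (X a ω, X b ω, (fun i : S => X i ω), Q ω)) :=
    (Hent_comp_of_injective μ _ (injective_id.prodMap (injective_split_insert b S))).symm
  have haS : Hent μ (fun ω => ((fun i : (insert a S : Finset ι) => X i ω), Q ω)) =
      Hent μ (fun ω => (X a ω, (fun i : S => X i ω), Q ω)) :=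
    (Hent_comp_of_injective μ _ (injective_split_insert a S)).symm
  have hbS : Hent μ (fun ω => ((fun i : (insert b S : Finset ι) => X i ω), Q ω)) =
      Hent μ (fun ω => (X b ω, (fun i : S => X i ω), Q ω)) :=
    (Hent_comp_of_injective μ _ (injective_split_insert b S)).symm
  have := Hent_submodular μ (X a) (X b) (fun ω => ((fun i : S => X i ω), Q ω))
  simp only [Hcond]
  linarith

theorem Hcond_subfamily_empty (μ : PMF Ω) (X : ∀ i, Ω → α i) (Q : Ω → β) :
    Hcond μ (fun ω => fun i : (∅ : Finset ι) => X i ω) Q = 0 :=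
  sub_eq_zero.mpr (Hent_comp_of_injective μ _ Prod.snd_injective).symm

theorem Hcond_subfamily_univ [Fintype ι] (μ : PMF Ω) (X : ∀ i, Ω → α i) (Q : Ω → β) :
    Hcond μ (fun ω => fun i : (univ : Finset ι) => X i ω) Q =
      Hcond μ (fun ω i => X i ω) Q := by
  have hrestrict : Injective fun vc : (∀ i, α i) × β =>
      ((fun i : (univ : Finset ι) => vc.1 i), vc.2) := by
    rintro ⟨v, c⟩ ⟨w, d⟩ h
    simp only [Prod.mk.injEq] at h
    exact Prod.ext (funext fun i => congrFun h.1 ⟨i, mem_univ i⟩) h.2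
  rw [Hcond, Hcond, Hent_comp_of_injective μ (fun ω => ((fun i => X i ω), Q ω)) hrestrict]

end Subfamily

/-- Conditional Han's inequality: the average over all size-`T` subsets `𝒯` of
`H(X_𝒯 | Q)` is at least `(T/N) · H(X₁, …, X_N | Q)`. -/
theorem stmt6 {Ω β : Type*} {N : ℕ} (α : Fin N → Type*) [∀ i, Fintype (α i)] [Fintype β]
    (μ : PMF Ω) (X : ∀ i, Ω → α i) (Q : Ω → β) (T : ℕ) (hT1 : 1 ≤ T) (hTN : T ≤ N) :
    (T : ℝ) / N * Hcond μ (fun ω => fun i : Fin N => X i ω) Q ≤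
      (1 / (N.choose T : ℝ)) *
        ∑ 𝒯 ∈ Finset.powersetCard T (Finset.univ : Finset (Fin N)),
          Hcond μ (fun ω => fun i : 𝒯 => X i.1 ω) Q := by
  have han := (isSubmodular_Hcond_subfamily μ X Q).mul_choose_mul_le_mul_sum_powersetCard
    (Hcond_subfamily_empty μ X Q).ge (T := T) (by rwa [Fintype.card_fin])
  rw [Fintype.card_fin, Hcond_subfamily_univ] at han
  have hN : (0 : ℝ) < N := by exact_mod_cast hT1.trans hTN
  have hC : (0 : ℝ) < N.choose T := by exact_mod_cast Nat.choose_pos hTN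
  rw [div_mul_eq_mul_div, one_div_mul_eq_div, div_le_div_iff₀ hN hC]
  linarith
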